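/- Let D be a positive integer, let N_1, …, N_D be positive integers, let θ^{(i)}_{k} = (k+1/2)π/N_i, let 𝒩 be a finite set of multi-indices in ℕ^D, let (c_m)_{m∈𝒩} be real coefficients, and define p(θ_1, …, θ_D) = ∑_{m∈𝒩} c_m ∏_{i=1}^{D} cos(m_i θ_i). Then for every multi-index n ∈ ℕ^D, (∏_{i=1}^{D} 1/N_i) · ∑_{k_1=0}^{N_1−1} ⋯ ∑_{k_D=0}^{N_D−1} ( ∏_{i=1}^{D} cos(n_i θ^{(i)}_{k_i}) ) · p(θ^{(1)}_{k_1}, …, θ^{(D)}_{k_D}) = ∑_{m∈𝒩} c_m ∏_{i=1}^{D} ( (1/2)·Δ_{N_i}(m_i+n_i) + (1/2)·Δ_{N_i}(m_i−n_i) ). -/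

import Mathlib

open Real Finset

/-- The aliasing function `Δ_N : ℤ → ℝ`: `Δ_N ℓ = 1` if `ℓ ≡ 0 (mod 4N)`,
`Δ_N ℓ = -1` if `ℓ ≡ 2N (mod 4N)`, and `0` otherwise. -/
noncomputable def aliasDelta (N : ℕ) (ℓ : ℤ) : ℝ :=
  if ℓ % (4 * N) = 0 then 1 else if ℓ % (4 * N) = 2 * N then -1 else 0

/-!
The sum over the tensor grid factors into a product of one-dimensional sums, and the
product-to-sum formula `cos nθ cos mθ = (cos (m+n)θ + cos (m-n)θ) / 2` reduces each of these to
`∑_{k<N} cos (ℓ θ_k)`. If `2N ∣ ℓ`, say `ℓ = 2Nq`, then `ℓ θ_k = q(2k+1)π` and every term is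
`(-1)^q`. Otherwise, with `β = ℓπ/N`, the telescoping identity
`2 sin (β/2) ∑_{k<N} cos ((k+1/2)β) = sin (Nβ) = sin (ℓπ) = 0` forces the sum to vanish,
because `sin (β/2) ≠ 0` exactly when `2N ∤ ℓ`.
-/

theorem aliasDelta_eq_zero_of_not_dvd {N : ℕ} {ℓ : ℤ} (h : ¬ 2 * (N : ℤ) ∣ ℓ) :
    aliasDelta N ℓ = 0 := by
  have hmod : ℓ % (4 * N) % (2 * N) = ℓ % (2 * N) := Int.emod_emod_of_dvd ℓ ⟨2, by ring⟩
  rw [Int.dvd_iff_emod_eq_zero] at h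
  have h0 : ℓ % (4 * N) ≠ 0 := fun h0 => h (by rw [← hmod, h0, Int.zero_emod])
  have h2N : ℓ % (4 * N) ≠ 2 * N := fun h2N => h (by rw [← hmod, h2N, Int.emod_self])
  simp [aliasDelta, h0, h2N]

theorem aliasDelta_two_mul_mul {N : ℕ} (hN : 0 < N) (q : ℤ) :
    aliasDelta N (2 * N * q) = (-1) ^ q := by
  have hN' : (0 : ℤ) < N := by exact_mod_cast hN
  obtain ⟨r, rfl | rfl⟩ := Int.even_or_odd' q
  · have h0 : 2 * (N : ℤ) * (2 * r) % (4 * N) = 0 :=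
      Int.emod_eq_zero_of_dvd ⟨r, by ring⟩
    simp [aliasDelta, h0, (even_two_mul r).neg_one_zpow]
  · have h2N : 2 * (N : ℤ) * (2 * r + 1) % (4 * N) = 2 * N := by
      rw [show 2 * (N : ℤ) * (2 * r + 1) = 2 * N + 4 * N * r by ring,
        Int.add_mul_emod_self_left, Int.emod_eq_of_lt (by omega) (by omega)]
    simp [aliasDelta, h2N, hN.ne', (odd_two_mul_add_one r).neg_one_zpow]

theorem two_mul_sin_half_mul_sum_cos (β : ℝ) (N : ℕ) :
    2 * sin (β / 2) * ∑ k ∈ range N, cos ((k + 1 / 2) * β) = sin (N * β) := by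
  induction N with
  | zero => simp
  | succ N ih =>
    rw [sum_range_succ, mul_add, ih, Nat.cast_succ,
      show ((N : ℝ) + 1) * β = (N + 1 / 2) * β + β / 2 by ring,
      show (N : ℝ) * β = (N + 1 / 2) * β - β / 2 by ring, sin_add, sin_sub]
    ring

theorem sum_cos_mul_chebyshevAngle {N : ℕ} (hN : 0 < N) (ℓ : ℤ) :
    ∑ k ∈ range N, cos (ℓ * ((k + 1 / 2) * π / N)) = N * aliasDelta N ℓ := by
  have hNR : (N : ℝ) ≠ 0 := by positivity
  by_cases h : 2 * (N : ℤ) ∣ ℓ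
  · obtain ⟨q, rfl⟩ := h
    have hterm (k : ℕ) : cos (((2 * N * q : ℤ) : ℝ) * ((k + 1 / 2) * π / N)) = (-1) ^ q := by
      rw [← cos_int_mul_pi, ← cos_add_int_mul_two_pi (q * π) (q * k)]
      congr 1
      push_cast
      field_simp
      ring
    simp only [hterm, sum_const, card_range, nsmul_eq_mul, aliasDelta_two_mul_mul hN]
  · rw [aliasDelta_eq_zero_of_not_dvd h, mul_zero]
    set β : ℝ := ℓ * π / N with hβ
    have hsin : sin (β / 2) ≠ 0 := by
      rw [Ne, sin_eq_zero_iff]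
      rintro ⟨t, ht⟩
      refine h ⟨t, ?_⟩
      have : (ℓ : ℝ) = 2 * N * t := by
        rw [hβ] at ht
        field_simp at ht
        linear_combination -ht
      exact_mod_cast this
    have hsum := two_mul_sin_half_mul_sum_cos β N
    rw [show (N : ℝ) * β = ℓ * π by rw [hβ]; field_simp, sin_int_mul_pi] at hsum
    convert (mul_eq_zero.mp hsum).resolve_left (by simpa using hsin) using 3 with k
    rw [hβ]
    ring

theorem sum_cos_mul_cos_chebyshevAngle {N : ℕ} (hN : 0 < N) (m n : ℕ) :
    ∑ k ∈ range N, cos (n * ((k + 1 / 2) * π / N)) * cos (m * ((k + 1 / 2) * π / N)) =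
      N * (1 / 2 * aliasDelta N (m + n) + 1 / 2 * aliasDelta N (m - n)) := by
  have hprod (θ : ℝ) : cos (n * θ) * cos (m * θ) =
      1 / 2 * cos (((m + n : ℤ) : ℝ) * θ) + 1 / 2 * cos (((m - n : ℤ) : ℝ) * θ) := by
    push_cast
    rw [add_mul, sub_mul, cos_add, cos_sub]
    ring
  simp only [hprod, sum_add_distrib, ← mul_sum, sum_cos_mul_chebyshevAngle hN]
  ring

theorem prod_one_div_mul_sum_piFinset_prod_cos_mul_prod_cos {ι : Type*} [Fintype ι]
    [DecidableEq ι] {N : ι → ℕ} (hN : ∀ i, 0 < N i) (m n : ι → ℕ) :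
    (∏ i, 1 / (N i : ℝ)) * ∑ k ∈ Fintype.piFinset (fun i => range (N i)),
        (∏ i, cos (n i * ((k i + 1 / 2) * π / N i))) *
          ∏ i, cos (m i * ((k i + 1 / 2) * π / N i)) =
      ∏ i, (1 / 2 * aliasDelta (N i) (m i + n i) + 1 / 2 * aliasDelta (N i) (m i - n i)) := by
  simp_rw [← prod_mul_distrib]
  rw [← prod_univ_sum (fun i => range (N i)) fun i (k : ℕ) =>
    cos (n i * ((k + 1 / 2) * π / N i)) * cos (m i * ((k + 1 / 2) * π / N i)),
    ← prod_mul_distrib]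
  refine prod_congr rfl fun i _ => ?_
  have hNi : (N i : ℝ) ≠ 0 := by have := hN i; positivity
  rw [sum_cos_mul_cos_chebyshevAngle (hN i)]
  field_simp

theorem stmt11_general (D : ℕ) (N : Fin D → ℕ) (hN : ∀ i, 0 < N i)
    (𝒩 : Finset (Fin D → ℕ)) (c : (Fin D → ℕ) → ℝ)
    (p : (Fin D → ℝ) → ℝ)
    (hp : ∀ θ : Fin D → ℝ,
      p θ = ∑ m ∈ 𝒩, c m * ∏ i, Real.cos ((m i : ℝ) * θ i))
    (n : Fin D → ℕ) :
    (∏ i, (1 / (N i : ℝ))) *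
      ∑ k ∈ Fintype.piFinset (fun i => Finset.range (N i)),
        (∏ i, Real.cos ((n i : ℝ) * (((k i : ℝ) + 1 / 2) * Real.pi / (N i)))) *
          p (fun i => ((k i : ℝ) + 1 / 2) * Real.pi / (N i)) =
    ∑ m ∈ 𝒩,
      c m *
        ∏ i,
          ((1 / 2) * aliasDelta (N i) ((m i : ℤ) + (n i : ℤ)) +
            (1 / 2) * aliasDelta (N i) ((m i : ℤ) - (n i : ℤ))) := by
  simp_rw [← prod_one_div_mul_sum_piFinset_prod_cos_mul_prod_cos hN _ n, hp, mul_sum]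
  rw [sum_comm]
  refine sum_congr rfl fun m _ => sum_congr rfl fun k _ => ?_
  ring

theorem stmt11 (D : ℕ) (hD : 0 < D) (N : Fin D → ℕ) (hN : ∀ i, 0 < N i)
    (𝒩 : Finset (Fin D → ℕ)) (c : (Fin D → ℕ) → ℝ)
    (p : (Fin D → ℝ) → ℝ)
    (hp : ∀ θ : Fin D → ℝ,
      p θ = ∑ m ∈ 𝒩, c m * ∏ i, Real.cos ((m i : ℝ) * θ i))
    (n : Fin D → ℕ) :
    (∏ i, (1 / (N i : ℝ))) *
      ∑ k ∈ Fintype.piFinset (fun i => Finset.range (N i)),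
        (∏ i, Real.cos ((n i : ℝ) * (((k i : ℝ) + 1 / 2) * Real.pi / (N i)))) *
          p (fun i => ((k i : ℝ) + 1 / 2) * Real.pi / (N i)) =
    ∑ m ∈ 𝒩,
      c m *
        ∏ i,
          ((1 / 2) * aliasDelta (N i) ((m i : ℤ) + (n i : ℤ)) +
            (1 / 2) * aliasDelta (N i) ((m i : ℤ) - (n i : ℤ))) :=
  stmt11_general D N hN 𝒩 c p hp n
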